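/- Let a_{ij}, b_{ij} (1 ≤ i,j ≤ 2) be real numbers and let P = (p_{ij}) be a 2×2 matrix with positive entries summing to 1 such that f_1(P) = f_2(P) = 0 (a dependency equilibrium). Set x_1 = a_{11}p_{11}+a_{12}p_{12}+a_{21}p_{21}+a_{22}p_{22} and x_2 = b_{11}p_{11}+b_{12}p_{12}+b_{21}p_{21}+b_{22}p_{22}. Then the determinant of the 4×4 Konstanz matrix [[x_1−a_{11}, x_1−a_{12}, 0, 0],[0, 0, x_1−a_{21}, x_1−a_{22}],[x_2−b_{11}, 0, x_2−b_{21}, 0],[0, x_2−b_{12}, 0, x_2−b_{22}]] is zero. (The expected payoff vector of every dependency equilibrium of a 2×2 game lies on the payoff curve det K_X(x) = 0.) -/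
import Mathlib

/-- The expected payoff vector of every dependency equilibrium
of a `2 × 2` game lies on the payoff curve `det K_X(x) = 0` given by the
`4 × 4` Konstanz matrix. -/
theorem payoff_of_dependency_equilibrium_on_konstanz_curve
    (a11 a12 a21 a22 b11 b12 b21 b22 : ℝ)
    (p11 p12 p21 p22 : ℝ)
    (hpos : 0 < p11 ∧ 0 < p12 ∧ 0 < p21 ∧ 0 < p22)
    (hsum : p11 + p12 + p21 + p22 = 1)
    (hf1 : (p11 + p12) * (a21 * p21 + a22 * p22)
      - (a11 * p11 + a12 * p12) * (p21 + p22) = 0)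
    (hf2 : (p11 + p21) * (b12 * p12 + b22 * p22)
      - (b11 * p11 + b21 * p21) * (p12 + p22) = 0)
    (x1 x2 : ℝ)
    (hx1 : x1 = a11 * p11 + a12 * p12 + a21 * p21 + a22 * p22)
    (hx2 : x2 = b11 * p11 + b12 * p12 + b21 * p21 + b22 * p22) :
    Matrix.det !![x1 - a11, x1 - a12, 0, 0;
                  0, 0, x1 - a21, x1 - a22;
                  x2 - b11, 0, x2 - b21, 0;
                  0, x2 - b12, 0, x2 - b22] = 0 := by
  obtain ⟨h1, h2, h3, h4⟩ := hpos
  rw [← Matrix.exists_mulVec_eq_zero_iff]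
  refine ⟨![p11, p12, p21, p22], ?_, ?_⟩
  · intro h
    have := congrFun h 0
    simp at this
    exact h1.ne' this
  · funext i
    fin_cases i <;>
      simp [Matrix.mulVec, dotProduct, Fin.sum_univ_four, hx1, hx2]
    · linear_combination hf1 + (a11*p11 + a12*p12) * hsum
    · linear_combination -hf1 + (a21*p21 + a22*p22) * hsum
    · linear_combination hf2 + (b11*p11 + b21*p21) * hsum
    · linear_combination -hf2 + (b12*p12 + b22*p22) * hsum
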